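/- arXiv:2107.12870 — 5 statements merged into one kernel-verified Lean document; each statement's English description precedes it below -/
import Mathlib

section
/- In a finite strategic form game where each player's payoff is given by the Shapley pay scheme applied to a production function (i.e., a free and fair economy), the sum of excess payoffs along any cycle of unilateral deviations equals zero. That is, if x^1, ..., x^k, x^{k+1}=x^1 is a sequence of strategy profiles where each x^{l+1} differs from x^l only in the strategy of some player j_l, then the sum over l of [u_{j_l}(x^{l+1}) - u_{j_l}(x^l)] equals 0. -/
open Finset

noncomputable section

variable {ι : Type*}

/-- Sub-profile of `x` relative to the reference profile `o`:
agents in `S` play their `x`-coordinate, all others play their reference action. -/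
def subp [DecidableEq ι] {X : ι → Type*} (o x : ∀ i, X i) (S : Finset ι) : ∀ i, X i :=
  fun j => if j ∈ S then x j else o j

/-- The set of active agents at profile `x` (those deviating from the reference `o`). -/
def active [DecidableEq ι] [Fintype ι] {X : ι → Type*} [∀ i, DecidableEq (X i)]
    (o x : ∀ i, X i) : Finset ι :=
  Finset.univ.filter fun j => x j ≠ o j

/-- The multivariate Shapley pay scheme. -/
def Sh [DecidableEq ι] [Fintype ι] {X : ι → Type*} [∀ i, DecidableEq (X i)]
    (o : ∀ i, X i) (f : (∀ i, X i) → ℝ) (i : ι) (x : ∀ i, X i) : ℝ :=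
  ∑ S ∈ ((active o x).erase i).powerset,
    ((S.card.factorial * ((active o x).card - S.card - 1).factorial : ℝ) /
        ((active o x).card.factorial)) *
      (f (subp o x (insert i S)) - f (subp o x S))

end


/-!
For a cooperative game `v` with `v ∅ = 0`, the Shapley value of a player `i ∈ A` is the marginal
contribution of `i` to the Hart–Mas-Colell potential: `Sh_i(v, A) = P(v, A) - P(v, A \ {i})`.
At a profile `x` the relevant game is `S ↦ f(x_S)`, played by the active agents, and removing `i`
from the active set is resetting `x_i` to `o_i`. A unilateral deviation of `j` does not change the
profile obtained by resetting `j`, so each excess payoff along the cycle is a difference of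
potentials, and the sum telescopes to zero.
-/

open Nat

noncomputable section

namespace CooperativeGame

variable {ι : Type*} [DecidableEq ι]

def potentialWeight (a s : ℕ) : ℝ := ((s - 1)! * (a - s)! : ℝ) / a !

theorem potentialWeight_add_potentialWeight_succ {n s : ℕ} (hs : 1 ≤ s) (hsn : s ≤ n) :
    potentialWeight (n + 1) s + potentialWeight (n + 1) (s + 1) = potentialWeight n s := by
  obtain ⟨t, rfl⟩ : ∃ t, s = t + 1 := ⟨s - 1, by omega⟩
  obtain ⟨b, rfl⟩ : ∃ b, n = t + 1 + b := ⟨n - (t + 1), by omega⟩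
  have e₁ : t + 1 + b + 1 - (t + 1) = b + 1 := by omega
  have e₂ : t + 1 + b + 1 - (t + 1 + 1) = b := by omega
  have e₃ : t + 1 + b - (t + 1) = b := by omega
  simp only [potentialWeight, Nat.add_sub_cancel, e₁, e₂, e₃, Nat.factorial_succ]
  push_cast
  field_simp
  ring

variable (v : Finset ι → ℝ)

def shapleyValue (A : Finset ι) (i : ι) : ℝ :=
  ∑ S ∈ (A.erase i).powerset, potentialWeight A.card (S.card + 1) * (v (insert i S) - v S)

/-- The Hart–Mas-Colell potential. The weight of `∅` is junk (`(0 - 1)! = 1` in `ℕ`), which is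
harmless for games with `v ∅ = 0`. -/
def potential (A : Finset ι) : ℝ :=
  ∑ T ∈ A.powerset, potentialWeight A.card T.card * v T

theorem shapleyValue_eq_potential_sub {v} (hv : v ∅ = 0) {A : Finset ι} {i : ι} (hi : i ∈ A) :
    shapleyValue v A i = potential v A - potential v (A.erase i) := by
  obtain ⟨n, hn⟩ : ∃ n, A.card = n + 1 := ⟨(A.erase i).card, (card_erase_add_one hi).symm⟩
  have hcard : (A.erase i).card = n := by rw [card_erase_of_mem hi, hn, Nat.add_sub_cancel]
  have hsplit : potential v A = ∑ S ∈ (A.erase i).powerset,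
      (potentialWeight (n + 1) S.card * v S +
        potentialWeight (n + 1) (S.card + 1) * v (insert i S)) := by
    rw [potential, ← insert_erase hi, sum_powerset_insert (notMem_erase i A), insert_erase hi, hn,
      ← sum_add_distrib]
    refine sum_congr rfl fun S hS => ?_
    have hiS : i ∉ S := fun h => notMem_erase i A (mem_powerset.mp hS h)
    rw [card_insert_of_notMem hiS]
  rw [eq_sub_iff_add_eq, hsplit, potential, hcard, shapleyValue, hn, ← sum_add_distrib]
  refine sum_congr rfl fun S hS => ?_
  rcases S.eq_empty_or_nonempty with rfl | hne
  · simp [hv]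
  · have hSn : S.card ≤ n := hcard ▸ card_le_card (mem_powerset.mp hS)
    rw [← potentialWeight_add_potentialWeight_succ hne.card_pos hSn]
    ring

end CooperativeGame

open CooperativeGame

section Profiles

variable {ι : Type*} [DecidableEq ι] {X : ι → Type*}

theorem subp_empty (o x : ∀ i, X i) : subp o x ∅ = o := by
  funext j
  simp [subp]

theorem subp_insert_of_eq {o x : ∀ i, X i} {i : ι} (h : x i = o i) (S : Finset ι) :
    subp o x (insert i S) = subp o x S := by
  funext j
  by_cases hj : j = i
  · subst hj
    simp [subp, h]
  · simp [subp, hj]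

theorem subp_update_of_notMem (o x : ∀ i, X i) {i : ι} {S : Finset ι} (hi : i ∉ S) :
    subp o (Function.update x i (o i)) S = subp o x S := by
  funext j
  by_cases hj : j ∈ S
  · simp [subp, hj, Function.update_of_ne (ne_of_mem_of_not_mem hj hi)]
  · simp [subp, hj]

variable [Fintype ι] [∀ i, DecidableEq (X i)]

theorem active_update (o x : ∀ i, X i) (i : ι) :
    active o (Function.update x i (o i)) = (active o x).erase i := by
  ext j
  by_cases hj : j = i
  · subst hj
    simp [active]
  · simp [active, hj]

/-- Subtracting `f o` changes no marginal contribution and makes the empty coalition worth `0`. -/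
def profileGame (o : ∀ i, X i) (f : (∀ i, X i) → ℝ) (x : ∀ i, X i) (S : Finset ι) :
    ℝ :=
  f (subp o x S) - f o

def profilePotential (o : ∀ i, X i) (f : (∀ i, X i) → ℝ) (x : ∀ i, X i) : ℝ :=
  potential (profileGame o f x) (active o x)

theorem Sh_eq_shapleyValue (o : ∀ i, X i) (f : (∀ i, X i) → ℝ) (i : ι) (x : ∀ i, X i) :
    Sh o f i x = shapleyValue (profileGame o f x) (active o x) i := by
  refine sum_congr rfl fun S _ => ?_
  simp only [potentialWeight, profileGame, Nat.add_sub_cancel, Nat.sub_sub,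
    sub_sub_sub_cancel_right]

theorem Sh_eq_profilePotential_sub (o : ∀ i, X i) (f : (∀ i, X i) → ℝ) (i : ι)
    (x : ∀ i, X i) :
    Sh o f i x = profilePotential o f x - profilePotential o f (Function.update x i (o i)) := by
  by_cases hi : x i = o i
  · rw [← hi, Function.update_eq_self, sub_self, Sh]
    refine sum_eq_zero fun S _ => ?_
    rw [subp_insert_of_eq hi, sub_self, mul_zero]
  · have hact : i ∈ active o x := by simpa [active] using hi
    have hgame : potential (profileGame o f (Function.update x i (o i))) ((active o x).erase i) =
        potential (profileGame o f x) ((active o x).erase i) :=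
      sum_congr rfl fun S hS => by
        rw [profileGame, profileGame,
          subp_update_of_notMem o x fun h => notMem_erase i _ (mem_powerset.mp hS h)]
    rw [Sh_eq_shapleyValue, shapleyValue_eq_potential_sub (by simp [profileGame, subp_empty]) hact,
      profilePotential, profilePotential, active_update, hgame]

end Profiles

end

theorem Fin.sum_succ_sub_castSucc {M : Type*} [AddCommGroup M] {k : ℕ} (F : Fin (k + 1) → M) :
    ∑ l : Fin k, (F l.succ - F l.castSucc) = F (Fin.last k) - F 0 := by
  rw [sum_sub_distrib, sub_eq_sub_iff_add_eq_add, add_comm, ← Fin.sum_univ_succ,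
    Fin.sum_univ_castSucc, add_comm]

theorem stmt_0_general {ι : Type*} [DecidableEq ι] [Fintype ι] {X : ι → Type*}
    [∀ i, DecidableEq (X i)]
    (o : ∀ i, X i) (f : (∀ i, X i) → ℝ)
    (k : ℕ) (x : Fin (k + 1) → ∀ i, X i) (j : Fin k → ι)
    (hcyc : x (Fin.last k) = x 0)
    (hdev : ∀ l : Fin k, ∀ m : ι, m ≠ j l → x l.castSucc m = x l.succ m) :
    ∑ l : Fin k, (Sh o f (j l) (x l.succ) - Sh o f (j l) (x l.castSucc)) = 0 := by
  have hstep : ∀ l : Fin k, Sh o f (j l) (x l.succ) - Sh o f (j l) (x l.castSucc) =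
      profilePotential o f (x l.succ) - profilePotential o f (x l.castSucc) := by
    intro l
    have hreset : Function.update (x l.succ) (j l) (o (j l)) =
        Function.update (x l.castSucc) (j l) (o (j l)) := by
      funext m
      by_cases hm : m = j l
      · subst hm
        simp
      · simp [Function.update_of_ne hm, hdev l m hm]
    rw [Sh_eq_profilePotential_sub, Sh_eq_profilePotential_sub, hreset, sub_sub_sub_cancel_right]
  rw [sum_congr rfl fun l _ => hstep l,
    Fin.sum_succ_sub_castSucc fun m => profilePotential o f (x m), hcyc, sub_self]

/-- In a free and fair economy (payoffs given by the Shapley pay scheme),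
the sum of excess payoffs along any cycle of unilateral deviations equals zero. -/
theorem stmt_0 {ι : Type*} [DecidableEq ι] [Fintype ι] {X : ι → Type*}
    [∀ i, Fintype (X i)] [∀ i, DecidableEq (X i)]
    (o : ∀ i, X i) (f : (∀ i, X i) → ℝ) (hf : f o = 0)
    (k : ℕ) (hk : 0 < k) (x : Fin (k + 1) → ∀ i, X i) (j : Fin k → ι)
    (hcyc : x (Fin.last k) = x 0)
    (hdev : ∀ l : Fin k, ∀ m : ι, m ≠ j l → x l.castSucc m = x l.succ m) :
    ∑ l : Fin k, (Sh o f (j l) (x l.succ) - Sh o f (j l) (x l.castSucc)) = 0 :=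
  stmt_0_general o f k x j hcyc hdev
end

section
/- In a finite strategic form game, if the sum of excess payoffs along every cycle of unilateral deviations is zero (equivalently, the game admits no cycle of strictly improving unilateral deviations), then the game has a pure strategy Nash equilibrium. -/
/-!
Profitable unilateral deviations form a relation on the finite set of strategy profiles. A
cycle of this relation is exactly a cycle of strictly improving deviations, so the relation
is acyclic and its transitive closure is a strict order on a finite set. A maximal profile of
that order admits no profitable deviation, i.e. it is a pure Nash equilibrium.
-/

open Function Relation

theorem Relation.TransGen.exists_fin_path {α : Type*} {r : α → α → Prop} {a b : α}
    (h : TransGen r a b) :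
    ∃ k, 0 < k ∧ ∃ x : Fin (k + 1) → α, x 0 = a ∧ x (Fin.last k) = b ∧
      ∀ l : Fin k, r (x l.castSucc) (x l.succ) := by
  induction h using TransGen.head_induction_on with
  | single hab => exact ⟨1, one_pos, ![_, b], rfl, rfl, fun l => by fin_cases l; exact hab⟩
  | head hac _ ih =>
    obtain ⟨k, hk, x, hx0, hxk, hx⟩ := ih
    refine ⟨k + 1, k.succ_pos, Fin.cons _ x, rfl, by simpa [← Fin.succ_last], ?_⟩
    intro l
    cases l using Fin.cases with
    | zero => simpa [hx0] using hac
    | succ i => simpa [← Fin.succ_castSucc] using hx i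

theorem exists_forall_not_rel_of_acyclic {α : Type*} [Finite α] [Nonempty α]
    {r : α → α → Prop} (hr : ∀ a, ¬ TransGen r a a) : ∃ a, ∀ b, ¬ r a b := by
  have : IsTrans α (swap (TransGen r)) := ⟨fun _ _ _ hab hbc => hbc.trans hab⟩
  have : Std.Irrefl (swap (TransGen r)) := ⟨hr⟩
  obtain ⟨a, -, ha⟩ := (Finite.wellFounded_of_trans_of_irrefl (swap (TransGen r))).has_min
    Set.univ Set.univ_nonempty
  exact ⟨a, fun b hab => ha b trivial (.single hab)⟩

section Game

variable {ι : Type*} [DecidableEq ι] {X : ι → Type*}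

def IsProfitableDeviation (u : ι → (∀ i, X i) → ℝ) (x y : ∀ i, X i) : Prop :=
  ∃ (i : ι) (yi : X i), y = update x i yi ∧ u i x < u i y

theorem exists_improvement_cycle_of_transGen {u : ι → (∀ i, X i) → ℝ} {x₀ : ∀ i, X i}
    (h : TransGen (IsProfitableDeviation u) x₀ x₀) :
    ∃ (k : ℕ) (_ : 0 < k) (x : Fin (k + 1) → ∀ i, X i) (j : Fin k → ι),
      x (Fin.last k) = x 0 ∧
      (∀ l : Fin k, ∀ m : ι, m ≠ j l → x l.castSucc m = x l.succ m) ∧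
      (∀ l : Fin k, u (j l) (x l.castSucc) < u (j l) (x l.succ)) := by
  obtain ⟨k, hk, x, hx0, hxk, hx⟩ := h.exists_fin_path
  choose j y hxy hlt using hx
  refine ⟨k, hk, x, j, hxk.trans hx0.symm, fun l m hm => ?_, hlt⟩
  rw [hxy l, update_of_ne hm]

end Game

/-- A finite strategic form game with no cycle of strictly improving
unilateral deviations has a pure strategy Nash equilibrium. -/
theorem stmt_2 {ι : Type*} [DecidableEq ι] [Fintype ι] {X : ι → Type*}
    [∀ i, Fintype (X i)] [∀ i, Nonempty (X i)]
    (u : ι → (∀ i, X i) → ℝ)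
    (hnocycle : ¬ ∃ (k : ℕ) (_ : 0 < k) (x : Fin (k + 1) → ∀ i, X i) (j : Fin k → ι),
      x (Fin.last k) = x 0 ∧
      (∀ l : Fin k, ∀ m : ι, m ≠ j l → x l.castSucc m = x l.succ m) ∧
      (∀ l : Fin k, u (j l) (x l.castSucc) < u (j l) (x l.succ))) :
    ∃ xs : ∀ i, X i, ∀ i : ι, ∀ y : X i,
      u i (Function.update xs i y) ≤ u i xs := by
  obtain ⟨xs, hxs⟩ := exists_forall_not_rel_of_acyclic (r := IsProfitableDeviation u)
    fun x hx => hnocycle (exists_improvement_cycle_of_transGen hx)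
  exact ⟨xs, fun i y => not_lt.mp fun hlt => hxs (update xs i y) ⟨i, y, rfl, hlt⟩⟩
end

section
/- Shifting the reference point to a maximizer of f makes the maximizer an equilibrium: let o' be a profile maximizing f over X, and define payoffs by ES̄^α_i(f,x) = α·(Sh_i(f - f(o'), x) + f(o')/n) + (1-α)·f(x)/n, where the Shapley scheme is computed with reference point o'. Then o' is a pure strategy Nash equilibrium of this game, and o' maximizes f, for every α ∈ [0,1]. -/
open Finset

lemma sh_ref {ι : Type*} [DecidableEq ι] [Fintype ι] {X : ι → Type*} [∀ i, DecidableEq (X i)]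
    (o : ∀ i, X i) (g : (∀ i, X i) → ℝ) (i : ι) : Sh o g i o = 0 := by
  have h : ∀ S : Finset ι, subp o o S = o := by
    intro S; funext j; simp [subp]
  unfold Sh
  simp [h]

/-- Shifting the reference point to a maximizer o' of f makes o' a pure
strategy Nash equilibrium of the game with payoffs
ES̄^α_i(f,x) = α·(Sh_i(f - f(o'), x) + f(o')/n) + (1-α)·f(x)/n, for every α ∈ [0,1]. -/
theorem stmt_13 {ι : Type*} [DecidableEq ι] [Fintype ι] {X : ι → Type*}
    [∀ i, Fintype (X i)] [∀ i, DecidableEq (X i)]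
    (f : (∀ i, X i) → ℝ) (o' : ∀ i, X i)
    (hmax : ∀ y : ∀ i, X i, f y ≤ f o')
    (α : ℝ) (hα0 : 0 ≤ α) (hα1 : α ≤ 1) :
    (∀ i : ι, ∀ y : X i,
      (α * (Sh o' (fun z => f z - f o') i (Function.update o' i y) + f o' / (Fintype.card ι)) +
        (1 - α) * f (Function.update o' i y) / (Fintype.card ι)) ≤
      (α * (Sh o' (fun z => f z - f o') i o' + f o' / (Fintype.card ι)) +
        (1 - α) * f o' / (Fintype.card ι))) ∧
    (∀ y : ∀ i, X i, f y ≤ f o') := by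
  refine ⟨?_, hmax⟩
  intro i y
  have hn : (0:ℝ) < Fintype.card ι := by
    have : Nonempty ι := ⟨i⟩
    exact_mod_cast Fintype.card_pos
  have hsh0 : Sh o' (fun z => f z - f o') i o' = 0 := sh_ref o' _ i
  by_cases hy : y = o' i
  · subst hy
    simp [Function.update_eq_self]
  · set x := Function.update o' i y with hxdef
    have hact : active o' x = {i} := by
      ext j
      simp only [active, Finset.mem_filter, Finset.mem_univ, true_and, Finset.mem_singleton,
        hxdef, Function.update_apply]
      constructor
      · intro h; by_contra hji; simp [Function.update_of_ne hji] at h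
      · intro hji; subst hji; simp [hy]
    have hsubp1 : subp o' x {i} = x := by
      funext j
      by_cases hji : j = i <;> simp [subp, hji, hxdef, Function.update_apply]
    have hsubp0 : subp o' x (∅ : Finset ι) = o' := by
      funext j; simp [subp]
    have hsh : Sh o' (fun z => f z - f o') i x = f x - f o' := by
      unfold Sh
      rw [hact]
      simp [Finset.erase_singleton, Finset.powerset_empty, hsubp1, hsubp0]
    rw [hsh, hsh0]
    have hab : f x ≤ f o' := hmax x
    have h1 : α * (f x - f o') ≤ 0 :=
      mul_nonpos_of_nonneg_of_nonpos hα0 (by linarith)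
    have h2 : (1 - α) * f x / (Fintype.card ι : ℝ) ≤ (1 - α) * f o' / (Fintype.card ι : ℝ) := by
      gcongr
    linarith
end

section
/- The family of basis production functions spans the space of production functions: for any finite strategy space X with reference profile o and total orders R_i on each X_i with o_i maximal, every f : X → ℝ with f(o) = 0 can be written as a real linear combination of the functions {f_x : x ∈ X, x ≠ o}, where f_x(z) = |N^x| if N^x ⊆ N^z and x_i R_i z_i for all i ∈ N^x, and f_x(z) = 0 otherwise. -/
open Finset

open scoped Classical in
/-- The basis production function f_x. -/
noncomputable def basisFn {ι : Type*} [DecidableEq ι] [Fintype ι] {X : ι → Type*}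
    [∀ i, DecidableEq (X i)]
    (o : ∀ i, X i) (R : ∀ i, X i → X i → Prop) (x z : ∀ i, X i) : ℝ :=
  if (∀ i ∈ active o x, z i ≠ o i ∧ R i (x i) (z i)) then ((active o x).card : ℝ) else 0

section Aux

open scoped Classical

variable {ι : Type*} [DecidableEq ι] [Fintype ι] {X : ι → Type*}
  [∀ i, Fintype (X i)] [∀ i, DecidableEq (X i)]

/-- The dominance preorder used in the basis functions. -/
def pre (o : ∀ i, X i) (R : ∀ i, X i → X i → Prop) (x z : ∀ i, X i) : Prop :=
  ∀ i, x i ≠ o i → z i ≠ o i ∧ R i (x i) (z i)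

theorem pre_refl (o : ∀ i, X i) (R : ∀ i, X i → X i → Prop)
    (hrefl : ∀ i a, R i a a) (z : ∀ i, X i) : pre o R z z :=
  fun i hi => ⟨hi, hrefl i (z i)⟩

theorem pre_trans {o : ∀ i, X i} {R : ∀ i, X i → X i → Prop}
    (htrans : ∀ (i : ι) (a b c : X i), R i a b → R i b c → R i a c)
    {x y z : ∀ i, X i} (hxy : pre o R x y) (hyz : pre o R y z) : pre o R x z := by
  intro i hi
  obtain ⟨h1, h2⟩ := hxy i hi
  obtain ⟨h3, h4⟩ := hyz i h1
  exact ⟨h3, htrans i _ _ _ h2 h4⟩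

theorem pre_antisymm {o : ∀ i, X i} {R : ∀ i, X i → X i → Prop}
    (hanti : ∀ (i : ι) (a b : X i), R i a b → R i b a → a = b)
    {x z : ∀ i, X i} (hxz : pre o R x z) (hzx : pre o R z x) : x = z := by
  funext i
  by_cases hi : x i = o i
  · by_cases hz : z i = o i
    · rw [hi, hz]
    · exact absurd (hzx i hz).1 (by simpa using hi)
  · obtain ⟨h1, h2⟩ := hxz i hi
    exact hanti i _ _ h2 (hzx i h1).2

/-- Rank of a profile: number of profiles dominated by it. -/
noncomputable def rk (o : ∀ i, X i) (R : ∀ i, X i → X i → Prop) (z : ∀ i, X i) : ℕ :=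
  (Finset.univ.filter fun x => pre o R x z).card

theorem rk_lt {o : ∀ i, X i} {R : ∀ i, X i → X i → Prop}
    (hanti : ∀ (i : ι) (a b : X i), R i a b → R i b a → a = b)
    (htrans : ∀ (i : ι) (a b c : X i), R i a b → R i b c → R i a c)
    (hrefl : ∀ i a, R i a a)
    {x z : ∀ i, X i} (hne : x ≠ z) (hxz : pre o R x z) :
    rk o R x < rk o R z := by
  apply Finset.card_lt_card
  constructor
  · intro y hy
    simp only [Finset.mem_filter, Finset.mem_univ, true_and] at hy ⊢
    exact pre_trans htrans hy hxz
  · intro hsub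
    have hz : z ∈ Finset.univ.filter fun y => pre o R y z := by
      simp [pre_refl o R hrefl z]
    have := hsub hz
    simp only [Finset.mem_filter, Finset.mem_univ, true_and] at this
    exact hne (pre_antisymm hanti this hxz).symm

/-- The coefficients, defined by well-founded recursion on rank. -/
noncomputable def cf (o : ∀ i, X i) (R : ∀ i, X i → X i → Prop)
    (hanti : ∀ (i : ι) (a b : X i), R i a b → R i b a → a = b)
    (htrans : ∀ (i : ι) (a b c : X i), R i a b → R i b c → R i a c)
    (hrefl : ∀ i a, R i a a)
    (f : (∀ i, X i) → ℝ) (z : ∀ i, X i) : ℝ :=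
  (f z - ∑ x ∈ (Finset.univ.filter fun x => x ≠ o ∧ x ≠ z ∧ pre o R x z).attach,
      cf o R hanti htrans hrefl f x.1 * basisFn o R x.1 z) / ((active o z).card)
termination_by rk o R z
decreasing_by
  have hx := x.2
  simp only [Finset.mem_filter, Finset.mem_univ, true_and] at hx
  exact rk_lt hanti htrans hrefl hx.2.1 hx.2.2

end Aux

/-- The family {f_x : x ≠ o} spans the space of production functions
vanishing at the reference profile o. -/
theorem stmt_14 {ι : Type*} [DecidableEq ι] [Fintype ι] {X : ι → Type*}
    [∀ i, Fintype (X i)] [∀ i, DecidableEq (X i)]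
    (o : ∀ i, X i) (R : ∀ i, X i → X i → Prop)
    (htot : ∀ (i : ι) (a b : X i), R i a b ∨ R i b a)
    (hanti : ∀ (i : ι) (a b : X i), R i a b → R i b a → a = b)
    (htrans : ∀ (i : ι) (a b c : X i), R i a b → R i b c → R i a c)
    (homax : ∀ (i : ι) (a : X i), R i (o i) a)
    (f : (∀ i, X i) → ℝ) (hf : f o = 0) :
    ∃ c : (∀ i, X i) → ℝ, ∀ z : ∀ i, X i,
      f z = ∑ x ∈ Finset.univ.filter (fun x : ∀ i, X i => x ≠ o), c x * basisFn o R x z := by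
  classical
  have hrefl : ∀ i a, R i a a := fun i a => (htot i a a).elim id id
  have hbpos : ∀ x z : ∀ i, X i, pre o R x z → basisFn o R x z = ((active o x).card : ℝ) := by
    intro x z h
    rw [basisFn, if_pos]
    intro i hi
    simp only [active, Finset.mem_filter, Finset.mem_univ, true_and] at hi
    exact h i hi
  have hbzero : ∀ x z : ∀ i, X i, ¬ pre o R x z → basisFn o R x z = 0 := by
    intro x z h
    rw [basisFn, if_neg]
    intro hc
    exact h fun i hi => hc i (by simp [active, hi])
  refine ⟨cf o R hanti htrans hrefl f, fun z => ?_⟩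
  -- restrict the sum to those x with pre o R x z
  have hsub : ∑ x ∈ Finset.univ.filter (fun x : ∀ i, X i => x ≠ o),
      cf o R hanti htrans hrefl f x * basisFn o R x z
      = ∑ x ∈ Finset.univ.filter (fun x : ∀ i, X i => x ≠ o ∧ pre o R x z),
      cf o R hanti htrans hrefl f x * basisFn o R x z := by
    refine (Finset.sum_subset ?_ ?_).symm
    · intro x hx
      simp only [Finset.mem_filter, Finset.mem_univ, true_and] at hx ⊢
      exact hx.1
    · intro x hx hnx
      simp only [Finset.mem_filter, Finset.mem_univ, true_and] at hx hnx
      rw [hbzero x z (fun h => hnx ⟨hx, h⟩), mul_zero]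
  rw [hsub]
  by_cases hz : z = o
  · subst hz
    rw [hf]
    refine (Finset.sum_eq_zero ?_).symm
    intro x hx
    simp only [Finset.mem_filter, Finset.mem_univ, true_and] at hx
    obtain ⟨hxo, hp⟩ := hx
    obtain ⟨i, hi⟩ : ∃ i, x i ≠ z i := by
      by_contra h
      push_neg at h
      exact hxo (funext h)
    exact absurd (hp i hi).1 (by simp)
  · have hset : Finset.univ.filter (fun x : ∀ i, X i => x ≠ o ∧ pre o R x z)
        = insert z (Finset.univ.filter fun x : ∀ i, X i => x ≠ o ∧ x ≠ z ∧ pre o R x z) := by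
      ext x
      simp only [Finset.mem_insert, Finset.mem_filter, Finset.mem_univ, true_and]
      constructor
      · rintro ⟨h1, h2⟩
        by_cases hxz : x = z
        · exact Or.inl hxz
        · exact Or.inr ⟨h1, hxz, h2⟩
      · rintro (rfl | ⟨h1, _, h3⟩)
        · exact ⟨hz, pre_refl o R hrefl _⟩
        · exact ⟨h1, h3⟩
    rw [hset, Finset.sum_insert (by simp)]
    have hcard : ((active o z).card : ℝ) ≠ 0 := by
      have : (active o z).Nonempty := by
        obtain ⟨i, hi⟩ : ∃ i, z i ≠ o i := by
          by_contra h
          push_neg at h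
          exact hz (funext h)
        exact ⟨i, by simp [active, hi]⟩
      simpa using Finset.card_ne_zero_of_mem this.choose_spec
    have hcz : cf o R hanti htrans hrefl f z * basisFn o R z z
        = f z - ∑ x ∈ Finset.univ.filter (fun x : ∀ i, X i => x ≠ o ∧ x ≠ z ∧ pre o R x z),
            cf o R hanti htrans hrefl f x * basisFn o R x z := by
      rw [hbpos z z (pre_refl o R hrefl z), cf, ← Finset.sum_attach
        (Finset.univ.filter fun x : ∀ i, X i => x ≠ o ∧ x ≠ z ∧ pre o R x z)
        (fun x => cf o R hanti htrans hrefl f x * basisFn o R x z)]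
      field_simp
    rw [hcz]
    ring
end

section
/- When every agent's strategy set is {0,1} with reference point 0, the multivariate Shapley pay scheme evaluated at the profile of all ones coincides with the classical Shapley value of the cooperative game v(S) = f(1_S): Sh_i(f, (1,...,1)) = Σ_{S ⊆ N \ {i}} [|S|!(n-|S|-1)!/n!] · (v(S ∪ {i}) - v(S)). -/
open Finset

/-- When every agent's strategy set is {0,1} with reference point 0, the
multivariate Shapley pay scheme at the all-ones profile is the classical Shapley value of
the cooperative game v(S) = f(1_S). -/
theorem stmt_16 {ι : Type*} [DecidableEq ι] [Fintype ι]
    (f : (ι → Bool) → ℝ) (hf : f (fun _ => false) = 0) (i : ι) :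
    Sh (X := fun _ => Bool) (fun _ => false) f i (fun _ => true) =
      ∑ S ∈ (Finset.univ.erase i).powerset,
        ((S.card.factorial * (Fintype.card ι - S.card - 1).factorial : ℝ) /
            (Fintype.card ι).factorial) *
          (f (fun j => decide (j ∈ insert i S)) - f (fun j => decide (j ∈ S))) := by
  have hact : active (ι := ι) (X := fun _ => Bool) (fun _ => false) (fun _ => true) =
      Finset.univ := by simp [active]
  have hsub : ∀ S : Finset ι, subp (X := fun _ => Bool) (fun _ => false) (fun _ => true) S
      = fun j => decide (j ∈ S) := by
    intro S; funext j; simp [subp]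
  simp only [Sh, hact, hsub, Finset.card_univ]
end
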